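/- arXiv:1806.07943 — 6 statements merged into one kernel-verified Lean document; each statement's English description precedes it below -/
import Mathlib

section
/- If X is a Banach space with a Schauder basis (xₙ), then the map T : L_X → X sending (aₙ) to ∑ₙ aₙxₙ is an isomorphism of normed spaces, where L_X carries the norm η((aₙ)) = supₙ ‖∑_{i=1}^n aᵢxᵢ‖. That is, every Schauder basis of a Banach space is an essential Schauder basis. -/
open Filter Topology

variable (𝕜 : Type*) [RCLike 𝕜]
variable {X : Type*} [NormedAddCommGroup X] [NormedSpace 𝕜 X]

/-- The `n`-th partial sum `∑_{i<n} aᵢ • xᵢ` of the expansion with coefficients `a`. -/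
noncomputable def partialSum (x : ℕ → X) (a : ℕ → 𝕜) (n : ℕ) : X :=
  ∑ i ∈ Finset.range n, a i • x i

/-- `v` has the expansion `v = ∑ᵢ aᵢ xᵢ` (ordered convergence of partial sums). -/
def Expands (x : ℕ → X) (a : ℕ → 𝕜) (v : X) : Prop :=
  Filter.Tendsto (partialSum 𝕜 x a) Filter.atTop (nhds v)

/-- `(xₙ)` is a Schauder basis of `X`: every vector has a unique expansion. -/
def IsSchauderBasis (x : ℕ → X) : Prop :=
  ∀ v : X, ∃! a : ℕ → 𝕜, Expands 𝕜 x a v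

/-- `(xₙ)` is an essential Schauder basis of `X`: a Schauder basis for which the canonical
map `T : L_X → X` is an isomorphism; equivalently (since `‖T‖ ≤ 1` always holds), there is
`C > 0` bounding `η(a) = supₙ ‖∑_{i<n} aᵢxᵢ‖ ≤ C‖v‖` for every expansion `v = ∑ aᵢxᵢ`,
i.e. `‖T⁻¹‖ ≤ C`. -/
def IsEssentialBasis (x : ℕ → X) : Prop :=
  IsSchauderBasis 𝕜 x ∧
    ∃ C > 0, ∀ (a : ℕ → 𝕜) (v : X), Expands 𝕜 x a v →
      ∀ n, ‖partialSum 𝕜 x a n‖ ≤ C * ‖v‖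

/-- `(xₙ)` is an essential basic sequence: an essential Schauder basis of the closure of
its linear span. -/
def IsEssentialBasicSeq (x : ℕ → X) : Prop :=
  (∀ v ∈ closure (Submodule.span 𝕜 (Set.range x) : Set X),
      ∃! a : ℕ → 𝕜, Expands 𝕜 x a v) ∧
    ∃ C > 0, ∀ (a : ℕ → 𝕜) (v : X), Expands 𝕜 x a v →
      ∀ n, ‖partialSum 𝕜 x a n‖ ≤ C * ‖v‖

/-- The Grunblum condition with constant `M`. -/
def Grunblum (x : ℕ → X) (M : ℝ) : Prop :=
  ∀ (a : ℕ → 𝕜) (m n : ℕ), m ≤ n →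
    ‖partialSum 𝕜 x a m‖ ≤ M * ‖partialSum 𝕜 x a n‖

/-! Model `L_X` by the sequences of partial sums: `a ↦ (∑_{i<n} aᵢxᵢ)ₙ` identifies it
isometrically with a subspace of `ℕ →ᵇ X`, namely the convergent sequences that start at `0` and
whose increments lie on the lines `𝕜 ∙ xₙ`. For complete `X` these three conditions are closed,
so `L_X` is a Banach space. Taking the limit is a bounded map `T : L_X → X` of norm at most `1`,
bijective because every vector has exactly one expansion; the open mapping theorem then bounds
`η(a) ≤ C‖v‖`. -/

open BoundedContinuousFunction

section PartialSumSequences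

theorem BoundedContinuousFunction.isClosed_setOf_cauchySeq {β : Type*} [PseudoMetricSpace β] :
    IsClosed {s : ℕ →ᵇ β | CauchySeq s} := by
  refine isClosed_of_closure_subset fun s hs => Metric.cauchySeq_iff.2 fun ε hε => ?_
  obtain ⟨t, ht, hst⟩ := Metric.mem_closure_iff.1 hs (ε / 4) (by positivity)
  obtain ⟨N, hN⟩ := Metric.cauchySeq_iff.1 ht (ε / 2) (by positivity)
  refine ⟨N, fun m hm n hn => ?_⟩
  calc dist (s m) (s n) ≤ dist (s m) (t m) + dist (t m) (t n) + dist (t n) (s n) :=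
        dist_triangle4 _ _ _ _
    _ < ε / 4 + ε / 2 + ε / 4 := by
        gcongr
        · exact (dist_coe_le_dist m).trans_lt hst
        · exact hN m hm n hn
        · exact (dist_coe_le_dist n).trans_lt (dist_comm s t ▸ hst)
    _ = ε := by ring

variable (X) in
def convergentSeqs : Submodule 𝕜 (ℕ →ᵇ X) where
  carrier := {s | ∃ v, Tendsto s atTop (𝓝 v)}
  zero_mem' := ⟨0, tendsto_const_nhds⟩
  add_mem' := fun ⟨v, hv⟩ ⟨w, hw⟩ => ⟨v + w, hv.add hw⟩
  smul_mem' := fun c _ ⟨v, hv⟩ => ⟨c • v, hv.const_smul c⟩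

variable {𝕜}

theorem isClosed_convergentSeqs [CompleteSpace X] :
    IsClosed (convergentSeqs 𝕜 X : Set (ℕ →ᵇ X)) := by
  convert isClosed_setOf_cauchySeq (β := X) using 1
  ext s
  exact ⟨fun ⟨_, hv⟩ => hv.cauchySeq, cauchySeq_tendsto_of_complete⟩

theorem tendsto_limUnder_convergentSeqs (s : convergentSeqs 𝕜 X) :
    Tendsto (s : ℕ →ᵇ X) atTop (𝓝 (limUnder atTop (s : ℕ →ᵇ X))) :=
  tendsto_nhds_limUnder s.2

variable (𝕜 X) in
noncomputable def seqLim : convergentSeqs 𝕜 X →L[𝕜] X :=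
  LinearMap.mkContinuous
    { toFun s := limUnder atTop (s : ℕ →ᵇ X)
      map_add' s t :=
        ((tendsto_limUnder_convergentSeqs s).add (tendsto_limUnder_convergentSeqs t)).limUnder_eq
      map_smul' c s := ((tendsto_limUnder_convergentSeqs s).const_smul c).limUnder_eq }
    1 fun s => by
      simpa using le_of_tendsto (tendsto_limUnder_convergentSeqs s).norm
        (Eventually.of_forall fun n => norm_coe_le_norm (s : ℕ →ᵇ X) n)

theorem tendsto_seqLim (s : convergentSeqs 𝕜 X) :
    Tendsto (s : ℕ →ᵇ X) atTop (𝓝 (seqLim 𝕜 X s)) :=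
  tendsto_limUnder_convergentSeqs s

variable (𝕜) in
noncomputable def partialSumSeqs (x : ℕ → X) : Submodule 𝕜 (ℕ →ᵇ X) :=
  (evalCLM 𝕜 0 : (ℕ →ᵇ X) →L[𝕜] X).ker ⊓
    (⨅ n, (𝕜 ∙ x n).comap (evalCLM 𝕜 (n + 1) - evalCLM 𝕜 n : (ℕ →ᵇ X) →L[𝕜] X).toLinearMap) ⊓
    convergentSeqs 𝕜 X

theorem isClosed_partialSumSeqs [CompleteSpace X] (x : ℕ → X) :
    IsClosed (partialSumSeqs 𝕜 x : Set (ℕ →ᵇ X)) := by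
  refine (ContinuousLinearMap.isClosed_ker _).inter ?_ |>.inter (isClosed_convergentSeqs (𝕜 := 𝕜))
  rw [Submodule.coe_iInf]
  exact isClosed_iInter fun n =>
    (𝕜 ∙ x n).closed_of_finiteDimensional.preimage (ContinuousLinearMap.continuous _)

variable {x : ℕ → X} {a : ℕ → 𝕜} {v : X}

theorem exists_eq_partialSum_iff {f : ℕ → X} :
    (∃ a, f = partialSum 𝕜 x a) ↔ f 0 = 0 ∧ ∀ n, ∃ c : 𝕜, c • x n = f (n + 1) - f n := by
  refine ⟨?_, fun ⟨hf0, hsucc⟩ => ?_⟩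
  · rintro ⟨a, rfl⟩
    exact ⟨by simp [partialSum], fun n => ⟨a n, by simp [partialSum, Finset.sum_range_succ]⟩⟩
  · choose a ha using hsucc
    refine ⟨a, funext fun n => ?_⟩
    rw [partialSum, Finset.sum_congr rfl fun i _ => ha i, Finset.sum_range_sub, hf0, sub_zero]

theorem mem_partialSumSeqs {s : ℕ →ᵇ X} :
    s ∈ partialSumSeqs 𝕜 x ↔ (∃ a, ⇑s = partialSum 𝕜 x a) ∧ ∃ v, Tendsto s atTop (𝓝 v) := by
  rw [exists_eq_partialSum_iff]
  simp [partialSumSeqs, Submodule.mem_span_singleton, convergentSeqs, and_assoc]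

variable (𝕜 x) in
noncomputable def sumMap : partialSumSeqs 𝕜 x →L[𝕜] X :=
  seqLim 𝕜 X ∘L (partialSumSeqs 𝕜 x).subtypeL.codRestrict _ fun s => s.2.2

theorem tendsto_sumMap (s : partialSumSeqs 𝕜 x) :
    Tendsto (s : ℕ →ᵇ X) atTop (𝓝 (sumMap 𝕜 x s)) :=
  tendsto_seqLim _

theorem expands_zero : Expands 𝕜 x 0 0 := by
  unfold Expands partialSum
  simp

theorem Expands.norm_le_iSup (h : Expands 𝕜 x a v) :
    ‖v‖ ≤ ⨆ n, ‖partialSum 𝕜 x a n‖ :=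
  le_of_tendsto h.norm (Eventually.of_forall fun n => le_ciSup h.norm.bddAbove_range n)

noncomputable def Expands.toPartialSumSeqs (h : Expands 𝕜 x a v) : partialSumSeqs 𝕜 x :=
  ⟨ofNormedAddCommGroupDiscrete (partialSum 𝕜 x a) _ fun n => le_ciSup h.norm.bddAbove_range n,
    mem_partialSumSeqs.2 ⟨⟨a, rfl⟩, v, h⟩⟩

theorem Expands.norm_toPartialSumSeqs (h : Expands 𝕜 x a v) :
    ‖h.toPartialSumSeqs‖ = ⨆ n, ‖partialSum 𝕜 x a n‖ :=
  norm_eq_iSup_norm _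

theorem Expands.sumMap_toPartialSumSeqs (h : Expands 𝕜 x a v) :
    sumMap 𝕜 x h.toPartialSumSeqs = v :=
  tendsto_nhds_unique (tendsto_sumMap _) h

theorem sumMap_surjective (hx : IsSchauderBasis 𝕜 x) :
    Function.Surjective (sumMap 𝕜 x) := fun v =>
  let ⟨_, h, _⟩ := hx v
  ⟨h.toPartialSumSeqs, h.sumMap_toPartialSumSeqs⟩

theorem sumMap_injective (hx : IsSchauderBasis 𝕜 x) :
    Function.Injective (sumMap 𝕜 x) := by
  refine (injective_iff_map_eq_zero _).2 fun s hs => ?_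
  obtain ⟨⟨a, ha⟩, -⟩ := mem_partialSumSeqs.1 s.2
  have hexp : Expands 𝕜 x a 0 := by
    rw [Expands, ← ha, ← hs]
    exact tendsto_sumMap s
  obtain rfl : a = 0 := (hx 0).unique hexp expands_zero
  ext n
  simp [ha, partialSum]

end PartialSumSequences

/-- in a Banach space, every Schauder basis is essential: the canonical map
`T : L_X → X` is an isomorphism (it is onto by the basis property, and `‖v‖ ≤ η(a) ≤ C‖v‖`). -/
theorem stmt1 [CompleteSpace X] (x : ℕ → X) (hx : IsSchauderBasis 𝕜 x) :
    ∃ C > 0, ∀ (a : ℕ → 𝕜) (v : X), Expands 𝕜 x a v →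
      ‖v‖ ≤ (⨆ n, ‖partialSum 𝕜 x a n‖) ∧
      (⨆ n, ‖partialSum 𝕜 x a n‖) ≤ C * ‖v‖ := by
  have : CompleteSpace (partialSumSeqs 𝕜 x) := (isClosed_partialSumSeqs x).completeSpace_coe
  obtain ⟨C, hC, hpreimage⟩ := (sumMap 𝕜 x).exists_preimage_norm_le (sumMap_surjective hx)
  refine ⟨C, hC, fun a v h => ⟨h.norm_le_iSup, ?_⟩⟩
  obtain ⟨s, hsv, hs⟩ := hpreimage v
  obtain rfl : s = h.toPartialSumSeqs :=
    sumMap_injective hx (hsv.trans h.sumMap_toPartialSumSeqs.symm)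
  exact h.norm_toPartialSumSeqs ▸ hs
end

section
/- Let X be a normed space with an essential Schauder basis (xₙ) and let (Pₙ) be the canonical partial-sum projections. Then supₙ ‖Pₙ‖ < ∞; in fact supₙ ‖Pₙ‖ ≤ ‖T⁻¹‖, where T : L_X → X is the canonical isomorphism. -/
open Filter Topology

variable (𝕜 : Type*) [RCLike 𝕜]
variable {X : Type*} [NormedAddCommGroup X] [NormedSpace 𝕜 X]

theorem ContinuousLinearMap.opNorm_le_bound_of_nontrivial {K K₂ E F : Type*}
    [NontriviallyNormedField K] [NontriviallyNormedField K₂] {σ : K →+* K₂}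
    [RingHomIsometric σ] [NormedAddCommGroup E] [Nontrivial E] [SeminormedAddCommGroup F]
    [NormedSpace K E] [NormedSpace K₂ F] (f : E →SL[σ] F) {C : ℝ}
    (hf : ∀ v, ‖f v‖ ≤ C * ‖v‖) : ‖f‖ ≤ C := by
  obtain ⟨v, hv⟩ := exists_ne (0 : E)
  have hC : 0 ≤ C :=
    nonneg_of_mul_nonneg_left ((norm_nonneg _).trans (hf v)) (norm_pos_iff.mpr hv)
  exact f.opNorm_le_bound hC hf

variable {𝕜} in
/-- If every `xᵢ` vanished, every coefficient sequence would expand `0`. -/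
theorem IsSchauderBasis.nontrivial {x : ℕ → X} (hx : IsSchauderBasis 𝕜 x) :
    Nontrivial X := by
  by_contra hX
  have := not_nontrivial_iff_subsingleton.mp hX
  have hexpands : ∀ a : ℕ → 𝕜, Expands 𝕜 x a 0 := fun a => by
    rw [Expands, Subsingleton.elim (partialSum 𝕜 x a) fun _ => 0]
    exact tendsto_const_nhds
  obtain ⟨_, -, huniq⟩ := hx 0
  have h : (fun _ => (1 : 𝕜)) = fun _ => 0 :=
    (huniq _ (hexpands _)).trans (huniq _ (hexpands _)).symm
  exact one_ne_zero (congrFun h 0)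

/-- `supₙ ‖Pₙ‖ ≤ ‖T⁻¹‖ < ∞`: for any bound `C` on `‖T⁻¹‖`,
each `‖Pₙ‖ ≤ C`, hence the supremum of the norms is at most `C`. -/
theorem stmt4 (x : ℕ → X) (hx : IsSchauderBasis 𝕜 x) (C : ℝ)
    (hC : ∀ (a : ℕ → 𝕜) (v : X), Expands 𝕜 x a v →
      ∀ n, ‖partialSum 𝕜 x a n‖ ≤ C * ‖v‖)
    (P : ℕ → X →L[𝕜] X)
    (hP : ∀ (n : ℕ) (a : ℕ → 𝕜) (v : X), Expands 𝕜 x a v → P n v = partialSum 𝕜 x a n) :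
    (∀ n, ‖P n‖ ≤ C) ∧ (⨆ n, ‖P n‖) ≤ C := by
  have := hx.nontrivial
  have hPC : ∀ n, ‖P n‖ ≤ C := fun n =>
    (P n).opNorm_le_bound_of_nontrivial fun v => by
      obtain ⟨a, ha, -⟩ := hx v
      exact hP n a v ha ▸ hC a v ha n
  exact ⟨hPC, ciSup_le hPC⟩
end

section
/- Let X be a normed space, (xₙ) an essential basic sequence with coordinate functionals (xₙ*), and (yₙ) a sequence with ∑ₙ ‖xₙ − yₙ‖·‖xₙ*‖ = λ < 1. Then for every scalar sequence (aₙ) and every n, (1−λ)‖∑_{i=1}^n aᵢxᵢ‖ ≤ ‖∑_{i=1}^n aᵢyᵢ‖ ≤ (1+λ)‖∑_{i=1}^n aᵢxᵢ‖. -/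
open Filter Topology

variable (𝕜 : Type*) [RCLike 𝕜]
variable {X : Type*} [NormedAddCommGroup X] [NormedSpace 𝕜 X]

/-!
A finite sum `v = ∑_{i<n} aᵢ xᵢ` is its own expansion in the basis, so the coordinate bound
(with `K i` in the role of `‖xᵢ*‖`) gives `‖aᵢ‖ ≤ ‖xᵢ*‖ ‖v‖` for `i < n`. Hence
`‖∑_{i<n} aᵢ (xᵢ - yᵢ)‖ ≤ λ ‖v‖`, and the two estimates are the triangle inequality in both
directions.
-/

open Finset

section PartialSum

variable {𝕜}

theorem partialSum_sub (x y : ℕ → X) (a : ℕ → 𝕜) (n : ℕ) :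
    partialSum 𝕜 x a n - partialSum 𝕜 y a n = partialSum 𝕜 (x - y) a n := by
  simp only [partialSum, Pi.sub_apply, smul_sub, sum_sub_distrib]

theorem norm_partialSum_le_of_norm_le (z : ℕ → X) (a : ℕ → 𝕜) (n : ℕ) (K : ℕ → ℝ) (r : ℝ)
    (ha : ∀ i < n, ‖a i‖ ≤ K i * r) :
    ‖partialSum 𝕜 z a n‖ ≤ (∑ i ∈ range n, ‖z i‖ * K i) * r :=
  calc ‖partialSum 𝕜 z a n‖
      ≤ ∑ i ∈ range n, ‖a i‖ * ‖z i‖ := by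
        simpa only [partialSum, norm_smul] using norm_sum_le (range n) fun i => a i • z i
    _ ≤ ∑ i ∈ range n, K i * r * ‖z i‖ :=
        sum_le_sum fun i hi => by gcongr; exact ha i (mem_range.1 hi)
    _ = (∑ i ∈ range n, ‖z i‖ * K i) * r := by
        rw [sum_mul]; exact sum_congr rfl fun i _ => by ring

theorem expands_partialSum (x : ℕ → X) (a : ℕ → 𝕜) (n : ℕ) :
    Expands 𝕜 x (fun i => if i < n then a i else 0) (partialSum 𝕜 x a n) := by
  refine tendsto_atTop_of_eventually_const (i₀ := n) fun k hk => ?_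
  simp only [partialSum, ite_smul, zero_smul, sum_ite, sum_const_zero, add_zero]
  congr 1
  ext i
  simp only [mem_filter, mem_range]
  omega

variable {x : ℕ → X} {K : ℕ → ℝ}

theorem norm_coeff_le_of_coordBound
    (hK : ∀ (n : ℕ) (a : ℕ → 𝕜) (v : X), Expands 𝕜 x a v → ‖a n‖ ≤ K n * ‖v‖)
    (a : ℕ → 𝕜) {i n : ℕ} (hi : i < n) :
    ‖a i‖ ≤ K i * ‖partialSum 𝕜 x a n‖ := by
  simpa only [if_pos hi] using hK i _ _ (expands_partialSum x a n)

theorem nonneg_of_coordBound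
    (hK : ∀ (n : ℕ) (a : ℕ → 𝕜) (v : X), Expands 𝕜 x a v → ‖a n‖ ≤ K n * ‖v‖)
    (i : ℕ) : 0 ≤ K i := by
  have h := norm_coeff_le_of_coordBound hK (fun _ => (1 : 𝕜)) (Nat.lt_succ_self i)
  rw [norm_one] at h
  exact (pos_of_mul_pos_left (one_pos.trans_le h) (norm_nonneg _)).le

end PartialSum

theorem norm_bounds_of_norm_sub_le {E : Type*} [SeminormedAddCommGroup E] {u v : E} {c : ℝ}
    (h : ‖u - v‖ ≤ c * ‖v‖) : (1 - c) * ‖v‖ ≤ ‖u‖ ∧ ‖u‖ ≤ (1 + c) * ‖v‖ := by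
  have h₁ := norm_sub_norm_le u v
  have h₂ := norm_sub_norm_le v u
  rw [norm_sub_rev] at h₂
  constructor <;> linarith

theorem stmt11 (x y : ℕ → X)
    (K : ℕ → ℝ)
    (hK : ∀ (n : ℕ) (a : ℕ → 𝕜) (v : X), Expands 𝕜 x a v → ‖a n‖ ≤ K n * ‖v‖)
    (hsum : Summable fun n => ‖x n - y n‖ * K n) :
    ∀ (a : ℕ → 𝕜) (n : ℕ),
      (1 - ∑' m, ‖x m - y m‖ * K m) * ‖partialSum 𝕜 x a n‖ ≤ ‖partialSum 𝕜 y a n‖ ∧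
      ‖partialSum 𝕜 y a n‖ ≤ (1 + ∑' m, ‖x m - y m‖ * K m) * ‖partialSum 𝕜 x a n‖ := by
  intro a n
  apply norm_bounds_of_norm_sub_le
  have hfinite : ∑ i ∈ range n, ‖x i - y i‖ * K i ≤ ∑' m, ‖x m - y m‖ * K m :=
    hsum.sum_le_tsum _ fun i _ => mul_nonneg (norm_nonneg _) (nonneg_of_coordBound hK i)
  calc ‖partialSum 𝕜 y a n - partialSum 𝕜 x a n‖
      = ‖partialSum 𝕜 (x - y) a n‖ := by rw [norm_sub_rev, partialSum_sub]
    _ ≤ (∑ i ∈ range n, ‖x i - y i‖ * K i) * ‖partialSum 𝕜 x a n‖ :=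
        norm_partialSum_le_of_norm_le _ a n K _ fun i hi => norm_coeff_le_of_coordBound hK a hi
    _ ≤ (∑' m, ‖x m - y m‖ * K m) * ‖partialSum 𝕜 x a n‖ := by gcongr
end

section
/- Let E be a normed space with an essential Schauder basis (xₙ), and let x = ∑_{i=1}^∞ aᵢxᵢ ∈ E. If (xₙ) satisfies the Grunblum inequality with constant M, then ‖x‖ ≤ supₙ ‖∑_{i=1}^n aᵢxᵢ‖ ≤ M‖x‖. -/
open Filter Topology

variable (𝕜 : Type*) [RCLike 𝕜]
variable {X : Type*} [NormedAddCommGroup X] [NormedSpace 𝕜 X]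

theorem norm_le_iSup_norm_of_tendsto {E : Type*} [SeminormedAddCommGroup E] {u : ℕ → E} {v : E}
    (hu : Tendsto u atTop (𝓝 v)) : ‖v‖ ≤ ⨆ n, ‖u n‖ :=
  le_of_tendsto' hu.norm fun n => le_ciSup hu.norm.bddAbove_range n

variable {𝕜} in
theorem Grunblum.norm_partialSum_le {x : ℕ → X} {M : ℝ} (hG : Grunblum 𝕜 x M) {a : ℕ → 𝕜} {v : X}
    (hav : Expands 𝕜 x a v) (m : ℕ) : ‖partialSum 𝕜 x a m‖ ≤ M * ‖v‖ :=
  ge_of_tendsto (hav.norm.const_mul M) <|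
    (eventually_ge_atTop m).mono fun n hmn => hG a m n hmn

theorem stmt17 (x : ℕ → X)
    (M : ℝ) (hG : Grunblum 𝕜 x M) :
    ∀ (a : ℕ → 𝕜) (v : X), Expands 𝕜 x a v →
      ‖v‖ ≤ (⨆ n, ‖partialSum 𝕜 x a n‖) ∧
      (⨆ n, ‖partialSum 𝕜 x a n‖) ≤ M * ‖v‖ :=
  fun _ _ hav => ⟨norm_le_iSup_norm_of_tendsto hav, ciSup_le (hG.norm_partialSum_le hav)⟩
end

section
/- Let X be a normed space with an essential basic sequence (xₙ) and let (yₙ) satisfy ∑ₙ ‖xₙ − yₙ‖·‖xₙ*‖ = λ < 1. Then the linear map T : span{xₙ} → closure(span{yₙ}) defined by T(∑ aᵢxᵢ) = ∑ aᵢyᵢ is well-defined and bounded with ‖T‖ ≤ 1 + λ. -/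
open Filter Topology

variable (𝕜 : Type*) [RCLike 𝕜]
variable {X : Type*} [NormedAddCommGroup X] [NormedSpace 𝕜 X]

/-!
On a finite combination `z = ∑ aᵢxᵢ` the coordinate bounds `‖aᵢ‖ ≤ Kᵢ‖z‖` give
`‖∑ aᵢyᵢ - z‖ ≤ ∑ ‖aᵢ‖‖xᵢ - yᵢ‖ ≤ λ‖z‖`, hence `‖∑ aᵢyᵢ‖ ≤ (1 + λ)‖z‖`. The same bounds make
`(xₙ)` linearly independent (a vanishing combination has vanishing coefficients), so the
formula defines a linear map on the span, namely the one sending the basis `xₙ` to `yₙ`.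
-/

section

variable {𝕜}

theorem partialSum_eq_linearCombination (x : ℕ → X) (c : ℕ →₀ 𝕜) {k : ℕ}
    (hk : c.support ⊆ Finset.range k) :
    partialSum 𝕜 x c k = Finsupp.linearCombination 𝕜 x c := by
  rw [Finsupp.linearCombination_apply, Finsupp.sum, partialSum]
  refine (Finset.sum_subset hk fun i _ hi => ?_).symm
  rw [Finsupp.notMem_support_iff.1 hi, zero_smul]

theorem expands_linearCombination (x : ℕ → X) (c : ℕ →₀ 𝕜) :
    Expands 𝕜 x c (Finsupp.linearCombination 𝕜 x c) := by
  obtain ⟨k, hk⟩ := c.support.exists_nat_subset_range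
  refine tendsto_atTop_of_eventually_const (i₀ := k) fun n hn => ?_
  exact partialSum_eq_linearCombination x c (hk.trans (Finset.range_subset_range.2 hn))

variable {x : ℕ → X} {K : ℕ → ℝ}

theorem coeff_bound_pos
    (hK : ∀ (n : ℕ) (a : ℕ → 𝕜) (v : X), Expands 𝕜 x a v → ‖a n‖ ≤ K n * ‖v‖) (n : ℕ) :
    0 < K n := by
  have h := hK n _ _ (expands_linearCombination x (Finsupp.single n (1 : 𝕜)))
  rw [Finsupp.linearCombination_single, one_smul, Finsupp.single_eq_same, norm_one] at h
  exact pos_of_mul_pos_left (one_pos.trans_le h) (norm_nonneg _)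

theorem linearIndependent_of_coeff_bound
    (hK : ∀ (n : ℕ) (a : ℕ → 𝕜) (v : X), Expands 𝕜 x a v → ‖a n‖ ≤ K n * ‖v‖) :
    LinearIndependent 𝕜 x := by
  refine linearIndependent_iff.2 fun c hc => Finsupp.ext fun i => ?_
  have h := hK i _ _ (expands_linearCombination x c)
  rw [hc, norm_zero, mul_zero] at h
  exact norm_le_zero_iff.1 h

theorem norm_partialSum_sub_le
    (hK : ∀ (n : ℕ) (a : ℕ → 𝕜) (v : X), Expands 𝕜 x a v → ‖a n‖ ≤ K n * ‖v‖)
    (y : ℕ → X) (hsum : Summable fun n => ‖x n - y n‖ * K n)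
    {a : ℕ → 𝕜} {v : X} (ha : Expands 𝕜 x a v) (k : ℕ) :
    ‖partialSum 𝕜 y a k - partialSum 𝕜 x a k‖ ≤ (∑' m, ‖x m - y m‖ * K m) * ‖v‖ := by
  rw [partialSum, partialSum, ← Finset.sum_sub_distrib]
  calc ‖∑ i ∈ Finset.range k, (a i • y i - a i • x i)‖
      ≤ ∑ i ∈ Finset.range k, ‖a i‖ * ‖x i - y i‖ := by
        refine (norm_sum_le _ _).trans (Finset.sum_le_sum fun i _ => ?_)
        rw [← smul_sub, norm_smul, norm_sub_rev]
    _ ≤ ∑ i ∈ Finset.range k, ‖x i - y i‖ * K i * ‖v‖ := by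
        refine Finset.sum_le_sum fun i _ => ?_
        nlinarith [hK i a v ha, norm_nonneg (x i - y i)]
    _ ≤ (∑' m, ‖x m - y m‖ * K m) * ‖v‖ := by
        rw [← Finset.sum_mul]
        refine mul_le_mul_of_nonneg_right ?_ (norm_nonneg _)
        exact hsum.sum_le_tsum _ fun i _ => mul_nonneg (norm_nonneg _) (coeff_bound_pos hK i).le

theorem norm_linearCombination_le
    (hK : ∀ (n : ℕ) (a : ℕ → 𝕜) (v : X), Expands 𝕜 x a v → ‖a n‖ ≤ K n * ‖v‖)
    (y : ℕ → X) (hsum : Summable fun n => ‖x n - y n‖ * K n) (c : ℕ →₀ 𝕜) :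
    ‖Finsupp.linearCombination 𝕜 y c‖ ≤
      (1 + ∑' m, ‖x m - y m‖ * K m) * ‖Finsupp.linearCombination 𝕜 x c‖ := by
  obtain ⟨k, hk⟩ := c.support.exists_nat_subset_range
  have h := norm_partialSum_sub_le hK y hsum (expands_linearCombination x c) k
  rw [partialSum_eq_linearCombination x c hk, partialSum_eq_linearCombination y c hk] at h
  have := norm_le_norm_add_norm_sub' (Finsupp.linearCombination 𝕜 y c)
    (Finsupp.linearCombination 𝕜 x c)
  linarith

theorem Module.Basis.span_constr_apply_of_partialSum {x : ℕ → X} (hli : LinearIndependent 𝕜 x)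
    (y : ℕ → X) {a : ℕ → 𝕜} {k : ℕ} {z : Submodule.span 𝕜 (Set.range x)}
    (hz : (z : X) = partialSum 𝕜 x a k) :
    (Module.Basis.span hli).constr 𝕜 y z = partialSum 𝕜 y a k := by
  have hz' : z = ∑ i ∈ Finset.range k, a i • Module.Basis.span hli i := by
    ext
    simp only [hz, partialSum, Submodule.coe_sum, Submodule.coe_smul, Module.Basis.span_apply]
  simp only [hz', map_sum, map_smul, Module.Basis.constr_basis, partialSum]

end

theorem stmt18 (x y : ℕ → X)
    (K : ℕ → ℝ)
    (hK : ∀ (n : ℕ) (a : ℕ → 𝕜) (v : X), Expands 𝕜 x a v → ‖a n‖ ≤ K n * ‖v‖)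
    (hsum : Summable fun n => ‖x n - y n‖ * K n) :
    ∃ T : Submodule.span 𝕜 (Set.range x) →ₗ[𝕜] X,
      (∀ (a : ℕ → 𝕜) (k : ℕ) (z : Submodule.span 𝕜 (Set.range x)),
          (z : X) = partialSum 𝕜 x a k → T z = partialSum 𝕜 y a k) ∧
      (∀ z : Submodule.span 𝕜 (Set.range x),
          T z ∈ closure (Submodule.span 𝕜 (Set.range y) : Set X)) ∧
      ∀ z : Submodule.span 𝕜 (Set.range x),
        ‖T z‖ ≤ (1 + ∑' m, ‖x m - y m‖ * K m) * ‖z‖ := by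
  have hli := linearIndependent_of_coeff_bound hK
  refine ⟨(Module.Basis.span hli).constr 𝕜 y,
    fun a k z hz => Module.Basis.span_constr_apply_of_partialSum hli y hz,
    fun z => subset_closure ?_, fun z => ?_⟩
  · rw [← Module.Basis.constr_range (Module.Basis.span hli) 𝕜]
    exact LinearMap.mem_range_self _ z
  · obtain ⟨c, hc⟩ := Finsupp.mem_span_range_iff_exists_finsupp.1 z.2
    obtain ⟨k, hk⟩ := c.support.exists_nat_subset_range
    have hz : (z : X) = partialSum 𝕜 x c k := by
      rw [partialSum_eq_linearCombination x c hk, ← hc, Finsupp.linearCombination_apply]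
    rw [Module.Basis.span_constr_apply_of_partialSum hli y hz,
      partialSum_eq_linearCombination y c hk, Submodule.coe_norm, hz,
      partialSum_eq_linearCombination x c hk]
    exact norm_linearCombination_le hK y hsum c
end

section
/- Let X be a normed space and (xₙ) a sequence of nonzero vectors satisfying the Grunblum condition with constant M. Let F = span{xₙ}, E its closure, and Rₙ : E → E the unique bounded extension of the n-th partial-sum operator Tₙ on F (valued in the completion of E, but with range in F). Then for every x ∈ E, x = limₙ Rₙ(x). -/
open Filter Topology

variable (𝕜 : Type*) [RCLike 𝕜]
variable {X : Type*} [NormedAddCommGroup X] [NormedSpace 𝕜 X]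

/-!
On the span of `x`, `Rₙ` is the partial-sum operator `Tₙ`, so the Grunblum condition bounds every
`Rₙ` by `M`, and `Rₙ y = y` as soon as `n` exceeds the length of the expansion of `y`. A uniformly
bounded family of operators is equicontinuous, so the set of points `z` with `Rₙ z → z` is closed;
it contains the dense span, hence is all of `E`.
-/

theorem exists_eq_partialSum_of_mem_span {x : ℕ → X} {v : X}
    (hv : v ∈ Submodule.span 𝕜 (Set.range x)) : ∃ (a : ℕ → 𝕜) (k : ℕ), v = partialSum 𝕜 x a k := by
  obtain ⟨c, rfl⟩ := Finsupp.mem_span_range_iff_exists_finsupp.mp hv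
  refine ⟨c, c.support.sup id + 1, Finset.sum_subset (fun i hi ↦ ?_) fun i _ hi ↦ ?_⟩
  · exact Finset.mem_range.mpr (Nat.lt_succ_of_le (Finset.le_sup (f := id) hi))
  · simp [Finsupp.notMem_support_iff.mp hi]

theorem Submodule.denseRange_inclusion_topologicalClosure {R M : Type*} [Semiring R]
    [AddCommMonoid M] [Module R M] [TopologicalSpace M] [ContinuousAdd M]
    [ContinuousConstSMul R M] (p : Submodule R M) :
    DenseRange (Submodule.inclusion p.le_topologicalClosure) :=
  (denseRange_inclusion_iff p.le_topologicalClosure).mpr subset_rfl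

def ExtendsPartialSums (x : ℕ → X)
    (R : ℕ → (Submodule.span 𝕜 (Set.range x)).topologicalClosure →L[𝕜] X) : Prop :=
  ∀ (n : ℕ) (a : ℕ → 𝕜) (k : ℕ) (z : (Submodule.span 𝕜 (Set.range x)).topologicalClosure),
    (z : X) = partialSum 𝕜 x a k → R n z = partialSum 𝕜 x a (min n k)

namespace ExtendsPartialSums

variable {𝕜} {x : ℕ → X} {R : ℕ → (Submodule.span 𝕜 (Set.range x)).topologicalClosure →L[𝕜] X}

theorem apply_eq_self (hR : ExtendsPartialSums 𝕜 x R)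
    (z : (Submodule.span 𝕜 (Set.range x)).topologicalClosure) {a : ℕ → 𝕜} {k n : ℕ}
    (hz : (z : X) = partialSum 𝕜 x a k) (hkn : k ≤ n) : R n z = z := by
  rw [hR n a k z hz, min_eq_right hkn, hz]

theorem tendsto_apply_of_mem_span (hR : ExtendsPartialSums 𝕜 x R)
    (z : (Submodule.span 𝕜 (Set.range x)).topologicalClosure)
    (hz : (z : X) ∈ Submodule.span 𝕜 (Set.range x)) :
    Tendsto (fun n ↦ R n z) atTop (𝓝 (z : X)) := by
  obtain ⟨a, k, hak⟩ := exists_eq_partialSum_of_mem_span 𝕜 hz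
  exact tendsto_const_nhds.congr' <|
    eventually_atTop.mpr ⟨k, fun n hkn ↦ (hR.apply_eq_self z hak hkn).symm⟩

theorem norm_apply_le {M : ℝ} (hR : ExtendsPartialSums 𝕜 x R) (hG : Grunblum 𝕜 x M) (n : ℕ)
    (z : (Submodule.span 𝕜 (Set.range x)).topologicalClosure) : ‖R n z‖ ≤ M * ‖z‖ := by
  refine (Submodule.denseRange_inclusion_topologicalClosure _).induction_on z
    (isClosed_le (by fun_prop) (by fun_prop)) fun y ↦ ?_
  obtain ⟨a, k, hak⟩ := exists_eq_partialSum_of_mem_span 𝕜 y.2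
  rw [hR n a k _ hak]
  calc ‖partialSum 𝕜 x a (min n k)‖ ≤ M * ‖partialSum 𝕜 x a k‖ := hG a _ k (min_le_right n k)
    _ = M * ‖Submodule.inclusion _ y‖ := by rw [← hak]; rfl

theorem tendsto_apply {M : ℝ} (hR : ExtendsPartialSums 𝕜 x R) (hG : Grunblum 𝕜 x M)
    (z : (Submodule.span 𝕜 (Set.range x)).topologicalClosure) :
    Tendsto (fun n ↦ R n z) atTop (𝓝 (z : X)) := by
  have hbdd : ∃ C, ∀ n z, ‖R n z‖ ≤ C * ‖z‖ := ⟨M, hR.norm_apply_le hG⟩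
  have hequi : Equicontinuous ((↑) ∘ R) := ((NormedSpace.equicontinuous_TFAE R).out 3 1).mp hbdd
  exact (Submodule.denseRange_inclusion_topologicalClosure _).induction_on z
    (hequi.isClosed_setOfPred_tendsto continuous_subtype_val)
    fun y ↦ hR.tendsto_apply_of_mem_span _ y.2

end ExtendsPartialSums

theorem stmt19 (x : ℕ → X)
    (M : ℝ) (hG : Grunblum 𝕜 x M)
    (R : ℕ → (Submodule.span 𝕜 (Set.range x)).topologicalClosure →L[𝕜] X)
    (hR : ∀ (n : ℕ) (a : ℕ → 𝕜) (k : ℕ)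
        (z : (Submodule.span 𝕜 (Set.range x)).topologicalClosure),
        (z : X) = partialSum 𝕜 x a k → R n z = partialSum 𝕜 x a (min n k)) :
    ∀ z : (Submodule.span 𝕜 (Set.range x)).topologicalClosure,
      Filter.Tendsto (fun n => R n z) Filter.atTop (nhds (z : X)) :=
  ExtendsPartialSums.tendsto_apply hR hG
end
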